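/- Let G be a finite vertex-weighted multigraph and H a spanning submultigraph of G (same vertex set, a subset of edges, and weights in H at most those in G). If H is admissibly contractible, then G is admissibly contractible. -/
import Mathlib


/-- A vertex-weighted multigraph on a finite vertex type `V`, recorded via the
number `mult v w` of edges between each pair of distinct vertices (no loops),
together with an integer weight on each vertex. -/
structure WMG (V : Type) [Fintype V] [DecidableEq V] where
  mult : V → V → ℕ
  symm : ∀ v w, mult v w = mult w v
  loopless : ∀ v, mult v v = 0
  wt : V → ℤ

namespace WMG

variable {V : Type} [Fintype V] [DecidableEq V]

/-- The degree of a vertex: the number of incident edges. -/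
def deg (G : WMG V) (v : V) : ℕ := ∑ w, G.mult v w

/-- The contraction of `G` with respect to the pair `{v, w}`: the vertices `v` and
`w` are identified (the merged vertex being `v`, with weight `wt v + wt w`), all
edges between `v` and `w` are deleted, and all other vertices, edges and weights
are kept. -/
def contract (G : WMG V) (v w : V) : WMG {x : V // x ≠ w} where
  mult x y :=
    if (x : V) = (y : V) then 0 else
      G.mult x y + (if (x : V) = v then G.mult w y else 0) +
        (if (y : V) = v then G.mult x w else 0)
  symm := by
    rintro ⟨x, hx⟩ ⟨y, hy⟩
    by_cases h : x = y
    · simp [h]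
    · simp only [h, Ne.symm h, if_false]
      rw [G.symm x y, G.symm w y, G.symm x w]
      ring
  loopless := by rintro ⟨x, hx⟩; simp
  wt x := if (x : V) = v then G.wt v + G.wt w else G.wt x

/-- The pair `{v, w}` admits an admissible contraction: there is `0 ≤ l < #(edges
between v and w)` such that every other vertex has degree at least `3`,
`wt v ≥ l + 1`, `wt w ≥ l + 2`, and `deg v − mult v w + l ≥ 3`,
`deg w − mult v w + l ≥ 3`. -/
def Admissible (G : WMG V) (v w : V) : Prop :=
  ∃ l : ℕ, l < G.mult v w ∧
    (∀ x : V, x ≠ v → x ≠ w → 3 ≤ G.deg x) ∧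
    (l : ℤ) + 1 ≤ G.wt v ∧ (l : ℤ) + 2 ≤ G.wt w ∧
    G.mult v w + 3 ≤ G.deg v + l ∧ G.mult v w + 3 ≤ G.deg w + l

/-- `G` is admissibly contractible if it can be reduced to a single vertex by a
sequence of admissible contractions. -/
inductive AC : (V : Type) → [Fintype V] → [DecidableEq V] → WMG V → Prop where
  | singleton {V : Type} [Fintype V] [DecidableEq V] (G : WMG V)
      (h : Fintype.card V = 1) : AC V G
  | step {V : Type} [Fintype V] [DecidableEq V] (G : WMG V) (v w : V)
      (hadm : G.Admissible v w) (ih : AC {x : V // x ≠ w} (G.contract v w)) : AC V G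

/-- `G` is admissibly contractible. -/
abbrev AdmissiblyContractible (G : WMG V) : Prop := AC V G

end WMG

theorem aux_mono : ∀ {V : Type} [Fintype V] [DecidableEq V] (H : WMG V),
    H.AdmissiblyContractible →
    ∀ G : WMG V, (∀ v w, H.mult v w ≤ G.mult v w) → (∀ v, H.wt v ≤ G.wt v) →
    G.AdmissiblyContractible := by
  intro V _ _ H hH
  induction hH with
  | singleton H' h => intro G _ _; exact WMG.AC.singleton G h
  | step H' v w hadm ih IH =>
    intro G hm hw
    have hdeg : ∀ x, H'.deg x ≤ G.deg x := fun x =>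
      Finset.sum_le_sum (fun y _ => hm x y)
    have hkey : ∀ x y, H'.deg x + G.mult x y ≤ G.deg x + H'.mult x y := by
      intro x y
      have h1 : ∑ z ∈ Finset.univ.erase y, H'.mult x z + H'.mult x y = H'.deg x :=
        Finset.sum_erase_add _ _ (Finset.mem_univ y)
      have h2 : ∑ z ∈ Finset.univ.erase y, G.mult x z + G.mult x y = G.deg x :=
        Finset.sum_erase_add _ _ (Finset.mem_univ y)
      have h3 : ∑ z ∈ Finset.univ.erase y, H'.mult x z ≤
          ∑ z ∈ Finset.univ.erase y, G.mult x z :=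
        Finset.sum_le_sum (fun z _ => hm x z)
      omega
    refine WMG.AC.step G v w ?_ (IH (G.contract v w) ?_ ?_)
    · obtain ⟨l, hl, hdeg3, hwv, hww, hdv, hdw⟩ := hadm
      refine ⟨l, lt_of_lt_of_le hl (hm v w), fun x hv hw' => le_trans (hdeg3 x hv hw') (hdeg x),
        le_trans hwv (hw v), le_trans hww (hw w), ?_, ?_⟩
      · have := hkey v w; omega
      · have := hkey w v
        rw [G.symm w v, H'.symm w v] at this
        omega
    · rintro ⟨x, hx⟩ ⟨y, hy⟩
      simp only [WMG.contract]
      split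
      · exact le_refl _
      · gcongr <;> first | exact hm _ _ | (split <;> first | exact hm _ _ | exact le_refl 0)
    · rintro ⟨x, hx⟩
      simp only [WMG.contract]
      split
      · exact add_le_add (hw v) (hw w)
      · exact hw x

/-- If `H` is a spanning submultigraph of `G` (same vertices, at most as many edges
between each pair of vertices, and smaller or equal weights) and `H` is admissibly
contractible, then so is `G`. -/
theorem spanning_submultigraph_admissiblyContractible
    {V : Type} [Fintype V] [DecidableEq V] (G H : WMG V)
    (hmult : ∀ v w, H.mult v w ≤ G.mult v w)
    (hwt : ∀ v, H.wt v ≤ G.wt v)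
    (hH : H.AdmissiblyContractible) :
    G.AdmissiblyContractible := by
  exact aux_mono H hH G hmult hwt
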